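/- Bounds on the infinite survival product: For all μ ∈ (0,1) and y ∈ (0,1), the infinite product Π_{k=0}^{∞} (1 − μ^k y) converges to a strictly positive limit and satisfies (1 − y)^{1/(1−μ)} ≤ Π_{k=0}^{∞} (1 − μ^k y) ≤ (1 − y)^{(1−y)/(1−μ)}. -/

import Mathlib

/-!
Take logarithms. By concavity of `log` (Bernoulli's inequality `(1 - y) ^ t ≤ 1 - t y` for
`t ∈ [0, 1]`) and by `log x ≤ x - 1`,
`μ ^ k log (1 - y) ≤ log (1 - μ ^ k y) ≤ -μ ^ k y`, and summing the geometric series gives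
`log (1 - y) / (1 - μ) ≤ log L ≤ -y / (1 - μ)`. The upper bound is weakened to the stated one
by `-y ≤ (1 - y) log (1 - y)`, which is `1 - x⁻¹ ≤ log x` at `x = 1 - y`.
-/

open Filter Real

lemma mul_log_one_sub_le_log_one_sub_mul {t y : ℝ} (ht0 : 0 ≤ t) (ht1 : t ≤ 1) (hy : y < 1) :
    t * log (1 - y) ≤ log (1 - t * y) := by
  have hbernoulli : (1 - y) ^ t ≤ 1 - t * y := by
    simpa [← sub_eq_add_neg] using
      rpow_one_add_le_one_add_mul_self (s := -y) (by linarith) ht0 ht1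
  rw [← log_rpow (by linarith)]
  exact log_le_log (rpow_pos_of_pos (by linarith) t) hbernoulli

lemma log_one_sub_le_neg {x : ℝ} (hx : x < 1) : log (1 - x) ≤ -x := by
  linarith [log_le_sub_one_of_pos (sub_pos.2 hx)]

lemma neg_le_one_sub_mul_log_one_sub {y : ℝ} (hy : y < 1) : -y ≤ (1 - y) * log (1 - y) := by
  have hpos : 0 < 1 - y := sub_pos.2 hy
  have h := mul_le_mul_of_nonneg_left (one_sub_inv_le_log_of_pos hpos) hpos.le
  rwa [mul_sub, mul_inv_cancel₀ hpos.ne', mul_one, sub_sub_cancel_left] at h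

section GeometricSurvival

variable {μ y : ℝ}

lemma one_sub_pow_mul_pos (hμ0 : 0 ≤ μ) (hμ1 : μ < 1) (hy : y < 1) (k : ℕ) :
    0 < 1 - μ ^ k * y := by
  have h0 : 0 ≤ μ ^ k := pow_nonneg hμ0 k
  have h1 : μ ^ k ≤ 1 := pow_le_one₀ hμ0 hμ1.le
  rcases le_or_gt y 0 with hy0 | hy0 <;> nlinarith

lemma summable_log_one_sub_pow_mul (hμ0 : 0 ≤ μ) (hμ1 : μ < 1) :
    Summable fun k : ℕ => log (1 - μ ^ k * y) := by
  simpa [← sub_eq_add_neg] using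
    summable_log_one_add_of_summable ((summable_geometric_of_lt_one hμ0 hμ1).mul_right y).neg

lemma log_one_sub_div_le_tsum_log_one_sub_pow_mul (hμ0 : 0 ≤ μ) (hμ1 : μ < 1) (hy : y < 1) :
    log (1 - y) / (1 - μ) ≤ ∑' k : ℕ, log (1 - μ ^ k * y) :=
  calc log (1 - y) / (1 - μ) = ∑' k : ℕ, μ ^ k * log (1 - y) := by
        rw [tsum_mul_right, tsum_geometric_of_lt_one hμ0 hμ1, div_eq_inv_mul]
    _ ≤ ∑' k : ℕ, log (1 - μ ^ k * y) :=
        ((summable_geometric_of_lt_one hμ0 hμ1).mul_right _).tsum_le_tsum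
          (fun k => mul_log_one_sub_le_log_one_sub_mul (pow_nonneg hμ0 k)
            (pow_le_one₀ hμ0 hμ1.le) hy)
          (summable_log_one_sub_pow_mul hμ0 hμ1)

lemma tsum_log_one_sub_pow_mul_le (hμ0 : 0 ≤ μ) (hμ1 : μ < 1) (hy : y < 1) :
    ∑' k : ℕ, log (1 - μ ^ k * y) ≤ -y / (1 - μ) :=
  calc ∑' k : ℕ, log (1 - μ ^ k * y) ≤ ∑' k : ℕ, -(μ ^ k * y) :=
        (summable_log_one_sub_pow_mul hμ0 hμ1).tsum_le_tsum
          (fun k => log_one_sub_le_neg (by linarith [one_sub_pow_mul_pos hμ0 hμ1 hy k]))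
          ((summable_geometric_of_lt_one hμ0 hμ1).mul_right y).neg
    _ = -y / (1 - μ) := by
        rw [tsum_neg, tsum_mul_right, tsum_geometric_of_lt_one hμ0 hμ1]
        ring

end GeometricSurvival

theorem infinite_survival_product_bounds_general (μ y : ℝ) (hμ0 : 0 < μ) (hμ1 : μ < 1)
    (hy1 : y < 1) :
    ∃ L : ℝ, 0 < L ∧
      Tendsto (fun t => ∏ k ∈ Finset.range t, (1 - μ ^ k * y)) atTop (nhds L) ∧
      (1 - y) ^ ((1 : ℝ) / (1 - μ)) ≤ L ∧ L ≤ (1 - y) ^ ((1 - y) / (1 - μ)) := by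
  set S := ∑' k : ℕ, log (1 - μ ^ k * y)
  have hprod : HasProd (fun k : ℕ => 1 - μ ^ k * y) (exp S) :=
    hasProd_of_hasSum_log (one_sub_pow_mul_pos hμ0.le hμ1 hy1)
      (summable_log_one_sub_pow_mul hμ0.le hμ1).hasSum
  refine ⟨exp S, exp_pos S, hprod.tendsto_prod_nat, ?_, ?_⟩
  · rw [rpow_def_of_pos (by linarith), exp_le_exp]
    calc log (1 - y) * (1 / (1 - μ)) = log (1 - y) / (1 - μ) := by ring
      _ ≤ S := log_one_sub_div_le_tsum_log_one_sub_pow_mul hμ0.le hμ1 hy1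
  · rw [rpow_def_of_pos (by linarith), exp_le_exp]
    calc S ≤ -y / (1 - μ) := tsum_log_one_sub_pow_mul_le hμ0.le hμ1 hy1
      _ ≤ (1 - y) * log (1 - y) / (1 - μ) :=
          div_le_div_of_nonneg_right (neg_le_one_sub_mul_log_one_sub hy1) (by linarith)
      _ = log (1 - y) * ((1 - y) / (1 - μ)) := by ring

/-- Bounds on the infinite survival product.  For all
`μ ∈ (0,1)` and `y ∈ (0,1)`, the infinite product `Π_{k=0}^∞ (1 − μ^k y)`
converges to a strictly positive limit `L` satisfying
`(1 − y)^{1/(1−μ)} ≤ L ≤ (1 − y)^{(1−y)/(1−μ)}`. -/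
theorem infinite_survival_product_bounds (μ y : ℝ) (hμ0 : 0 < μ) (hμ1 : μ < 1)
    (hy0 : 0 < y) (hy1 : y < 1) :
    ∃ L : ℝ, 0 < L ∧
      Tendsto (fun t => ∏ k ∈ Finset.range t, (1 - μ ^ k * y)) atTop (nhds L) ∧
      (1 - y) ^ ((1 : ℝ) / (1 - μ)) ≤ L ∧ L ≤ (1 - y) ^ ((1 - y) / (1 - μ)) :=
  infinite_survival_product_bounds_general μ y hμ0 hμ1 hy1
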